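/- Let n_B ≥ n_A ≥ 1 and let M_AB be a real 2n_A×2n_B matrix with singular value decomposition M_AB = U D Vᵀ, where U is a 2n_A×2n_A real orthogonal matrix, V is a 2n_B×2n_B real orthogonal matrix, and D is the 2n_A×2n_B matrix with D_{jj} = μ_j ≥ 0 for j = 1,…,2n_A and all other entries zero. For ε = (ε_1,…,ε_{2n_A}) with all ε_j > 0, define |M_AB^ε| = U·diag(ε_1 μ_1,…,ε_{2n_A} μ_{2n_A})·Uᵀ and |M_BA^{1/ε}| = V·diag(μ_1/ε_1,…,μ_{2n_A}/ε_{2n_A}, 0,…,0)·Vᵀ. Then for all z_A ∈ ℝ^{2n_A}, z_B ∈ ℝ^{2n_B}: 2⟨z_A, M_AB z_B⟩ ≤ ⟨|M_AB^ε| z_A, z_A⟩ + ⟨|M_BA^{1/ε}| z_B, z_B⟩; consequently, for any real symmetric M_AA, M_BB, the block matrix M = [[M_AA, M_AB], [M_ABᵀ, M_BB]] satisfies: ((M_AA + |M_AB^ε|) ⊕ (M_BB + |M_BA^{1/ε}|)) − M is positive semidefinite. -/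

import Mathlib

open Matrix

noncomputable section

private lemma amgm14 (a e x y : ℝ) (ha : 0 ≤ a) (he : 0 < e) :
    2*(a*x*y) ≤ e*a*x^2 + (a/e)*y^2 := by
  have h : 0 ≤ (a/e) * (e*x - y)^2 := by positivity
  have heq : (a/e)*(e*x-y)^2 = e*a*x^2 - 2*(a*x*y) + (a/e)*y^2 := by
    field_simp; ring
  linarith

theorem statement14 (nA nB : ℕ) (hA : 1 ≤ nA) (hAB : nA ≤ nB)
    (U : Matrix (Fin (2*nA)) (Fin (2*nA)) ℝ) (hU : Uᵀ * U = 1)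
    (V : Matrix (Fin (2*nB)) (Fin (2*nB)) ℝ) (hV : Vᵀ * V = 1)
    (μ : Fin (2*nA) → ℝ) (hμ : ∀ j, 0 ≤ μ j)
    (D : Matrix (Fin (2*nA)) (Fin (2*nB)) ℝ)
    (hD : ∀ i j, D i j = if (i : ℕ) = (j : ℕ) then μ i else 0)
    (MAB : Matrix (Fin (2*nA)) (Fin (2*nB)) ℝ) (hMAB : MAB = U * D * Vᵀ)
    (ε : Fin (2*nA) → ℝ) (hε : ∀ j, 0 < ε j) :
    (∀ (zA : Fin (2*nA) → ℝ) (zB : Fin (2*nB) → ℝ),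
        2 * (zA ⬝ᵥ (MAB *ᵥ zB)) ≤
          ((U * Matrix.diagonal (fun j => ε j * μ j) * Uᵀ) *ᵥ zA) ⬝ᵥ zA +
          ((V * Matrix.diagonal (fun j : Fin (2*nB) =>
              if hj : (j : ℕ) < 2*nA then μ ⟨j, hj⟩ / ε ⟨j, hj⟩ else 0) * Vᵀ) *ᵥ zB) ⬝ᵥ zB) ∧
    (∀ (MAA : Matrix (Fin (2*nA)) (Fin (2*nA)) ℝ)
        (MBB : Matrix (Fin (2*nB)) (Fin (2*nB)) ℝ), MAA.IsSymm → MBB.IsSymm →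
        (Matrix.fromBlocks
            (MAA + U * Matrix.diagonal (fun j => ε j * μ j) * Uᵀ) 0 0
            (MBB + V * Matrix.diagonal (fun j : Fin (2*nB) =>
              if hj : (j : ℕ) < 2*nA then μ ⟨j, hj⟩ / ε ⟨j, hj⟩ else 0) * Vᵀ) -
          Matrix.fromBlocks MAA MAB MABᵀ MBB).PosSemidef) := by
  have h2 : 2*nA ≤ 2*nB := by omega
  set dA : Fin (2*nA) → ℝ := fun j => ε j * μ j with hdA
  set dB : Fin (2*nB) → ℝ := fun j =>
    if hj : (j : ℕ) < 2*nA then μ ⟨j, hj⟩ / ε ⟨j, hj⟩ else 0 with hdB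
  have hdBnn : ∀ j, 0 ≤ dB j := by
    intro j
    rw [hdB]; dsimp only
    split
    · exact div_nonneg (hμ _) (hε _).le
    · exact le_refl 0
  have hdBcast : ∀ i : Fin (2*nA), dB (Fin.castLE h2 i) = μ i / ε i := by
    intro i
    rw [hdB]; dsimp only
    rw [dif_pos (show ((Fin.castLE h2 i : Fin (2*nB)) : ℕ) < 2*nA by simpa using i.isLt)]
    congr 1 <;> congr 1 <;> exact Fin.ext (by simp)
  set P := U * Matrix.diagonal dA * Uᵀ with hP
  set Q := V * Matrix.diagonal dB * Vᵀ with hQ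
  have key : ∀ (zA : Fin (2*nA) → ℝ) (zB : Fin (2*nB) → ℝ),
      2 * (zA ⬝ᵥ (MAB *ᵥ zB)) ≤ (P *ᵥ zA) ⬝ᵥ zA + (Q *ᵥ zB) ⬝ᵥ zB := by
    intro zA zB
    set x := zA ᵥ* U with hx
    set y := zB ᵥ* V with hy
    have hDy : ∀ i, (D *ᵥ y) i = μ i * y (Fin.castLE h2 i) := by
      intro i
      simp only [Matrix.mulVec, dotProduct, hD]
      rw [Finset.sum_eq_single (Fin.castLE h2 i)]
      · rw [if_pos (by simp)]
      · intro b _ hb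
        rw [if_neg, zero_mul]
        intro h; exact hb (Fin.ext (by simpa using h.symm))
      · intro h; exact absurd (Finset.mem_univ _) h
    have hL : zA ⬝ᵥ (MAB *ᵥ zB) = ∑ i, μ i * x i * y (Fin.castLE h2 i) := by
      rw [hMAB, ← Matrix.mulVec_mulVec, ← Matrix.mulVec_mulVec,
        Matrix.mulVec_transpose, ← hy, Matrix.dotProduct_mulVec, ← hx]
      simp only [dotProduct]
      exact Finset.sum_congr rfl fun i _ => by rw [hDy i]; ring
    have hQA : (P *ᵥ zA) ⬝ᵥ zA = ∑ i, dA i * x i ^ 2 := by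
      rw [hP, ← Matrix.mulVec_mulVec, ← Matrix.mulVec_mulVec,
        Matrix.mulVec_transpose, ← hx, dotProduct_comm,
        Matrix.dotProduct_mulVec, ← hx]
      simp only [dotProduct, Matrix.mulVec_diagonal]
      exact Finset.sum_congr rfl fun i _ => by ring
    have hQB : (Q *ᵥ zB) ⬝ᵥ zB = ∑ j, dB j * y j ^ 2 := by
      rw [hQ, ← Matrix.mulVec_mulVec, ← Matrix.mulVec_mulVec,
        Matrix.mulVec_transpose, ← hy, dotProduct_comm,
        Matrix.dotProduct_mulVec, ← hy]
      simp only [dotProduct, Matrix.mulVec_diagonal]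
      exact Finset.sum_congr rfl fun j _ => by ring
    rw [hL, hQA, hQB, Finset.mul_sum]
    have step1 : ∑ i, 2 * (μ i * x i * y (Fin.castLE h2 i)) ≤
        ∑ i, (dA i * x i ^ 2 + dB (Fin.castLE h2 i) * y (Fin.castLE h2 i) ^ 2) := by
      refine Finset.sum_le_sum fun i _ => ?_
      rw [hdBcast i, hdA]
      dsimp only
      rw [mul_comm (ε i) (μ i)]
      calc 2 * (μ i * x i * y (Fin.castLE h2 i)) = 2 * (μ i * x i * y (Fin.castLE h2 i)) := rfl
        _ ≤ ε i * μ i * x i ^ 2 + μ i / ε i * y (Fin.castLE h2 i) ^ 2 :=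
            amgm14 (μ i) (ε i) (x i) (y (Fin.castLE h2 i)) (hμ i) (hε i)
        _ = μ i * ε i * x i ^ 2 + μ i / ε i * y (Fin.castLE h2 i) ^ 2 := by ring
    have step2 : ∑ i : Fin (2*nA), dB (Fin.castLE h2 i) * y (Fin.castLE h2 i) ^ 2 ≤
        ∑ j, dB j * y j ^ 2 := by
      have := Finset.sum_le_sum_of_subset_of_nonneg
        (s := Finset.univ.map (Fin.castLEEmb h2)) (t := Finset.univ)
        (f := fun j => dB j * y j ^ 2) (Finset.subset_univ _)
        (fun j _ _ => mul_nonneg (hdBnn j) (sq_nonneg _))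
      rwa [Finset.sum_map] at this
    rw [Finset.sum_add_distrib] at step1
    linarith
  refine ⟨key, ?_⟩
  intro MAA MBB _ _
  have hΔ : Matrix.fromBlocks (MAA + P) 0 0 (MBB + Q) - Matrix.fromBlocks MAA MAB MABᵀ MBB
      = Matrix.fromBlocks P (-MAB) (-MABᵀ) Q := by
    ext i j
    rcases i with i | i <;> rcases j with j | j <;>
      simp [Matrix.fromBlocks, Matrix.sub_apply]
  rw [hΔ]
  have hPsymm : Pᵀ = P := by
    rw [hP, Matrix.transpose_mul, Matrix.transpose_mul, Matrix.transpose_transpose,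
      Matrix.diagonal_transpose, Matrix.mul_assoc]
  have hQsymm : Qᵀ = Q := by
    rw [hQ, Matrix.transpose_mul, Matrix.transpose_mul, Matrix.transpose_transpose,
      Matrix.diagonal_transpose, Matrix.mul_assoc]
  rw [Matrix.posSemidef_iff_dotProduct_mulVec]
  constructor
  · show _ᴴ = _
    rw [Matrix.conjTranspose_eq_transpose_of_trivial, Matrix.fromBlocks_transpose,
      hPsymm, hQsymm, Matrix.transpose_neg, Matrix.transpose_neg,
      Matrix.transpose_transpose]
  · intro z
    have hz : z = Sum.elim (z ∘ Sum.inl) (z ∘ Sum.inr) := by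
      funext i; cases i <;> rfl
    set x1 := z ∘ Sum.inl
    set x2 := z ∘ Sum.inr
    rw [Matrix.fromBlocks_mulVec, hz]
    rw [show star (Sum.elim x1 x2) = Sum.elim x1 x2 from rfl]
    rw [sumElim_dotProduct_sumElim]
    have e1 : x1 ⬝ᵥ (P *ᵥ x1 + (-MAB) *ᵥ x2) = (P *ᵥ x1) ⬝ᵥ x1 - x1 ⬝ᵥ (MAB *ᵥ x2) := by
      rw [dotProduct_add, Matrix.neg_mulVec, dotProduct_neg,
        dotProduct_comm]
      ring
    have e2 : x2 ⬝ᵥ ((-MABᵀ) *ᵥ x1 + Q *ᵥ x2) = (Q *ᵥ x2) ⬝ᵥ x2 - x1 ⬝ᵥ (MAB *ᵥ x2) := by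
      rw [dotProduct_add, Matrix.neg_mulVec, dotProduct_neg,
        dotProduct_comm x2 (Q *ᵥ x2)]
      have : x2 ⬝ᵥ (MABᵀ *ᵥ x1) = x1 ⬝ᵥ (MAB *ᵥ x2) := by
        rw [Matrix.mulVec_transpose, Matrix.dotProduct_mulVec, dotProduct_comm]
      rw [this]; ring
    simp only [Sum.elim_comp_inl, Sum.elim_comp_inr]
    rw [e1, e2]
    have := key x1 x2
    linarith
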